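/- Let Γ be a mixed graph with vertex set V, and let U ⊆ V. Then the subgroup of the TRAAG G_Γ generated by U is isomorphic to G_Δ, the TRAAG based on the full mixed subgraph Δ of Γ spanned by U. -/

import Mathlib

/-- A mixed graph: a simplicial graph (given by a symmetric irreflexive adjacency
relation) together with a set `D` of oriented edges; an oriented edge is recorded as the
ordered pair `(o e, t e)` of its origin and terminus, it must be an edge of the graph,
and an edge carries at most one orientation. -/
structure MixedGraph (V : Type*) where
  /-- adjacency relation: `adj u v` iff `{u,v}` is an edge -/
  adj : V → V → Prop
  symm : ∀ u v, adj u v → adj v u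
  loopless : ∀ v, ¬ adj v v
  /-- the set of oriented edges, as ordered pairs (origin, terminus) -/
  D : Set (V × V)
  D_isEdge : ∀ e ∈ D, adj e.1 e.2
  D_antisymm : ∀ e ∈ D, (e.2, e.1) ∉ D

namespace MixedGraph

variable {V : Type*}

/-- The relators of the twisted right-angled Artin group of a mixed graph: a commutator
`u v u⁻¹ v⁻¹` for each unoriented edge `{u,v}`, and a Klein-bottle relator `a b a⁻¹ b`
for each oriented edge `[a, b⟩`. -/
def traagRels (Γ : MixedGraph V) : Set (FreeGroup V) :=
  {r | (∃ u v : V, Γ.adj u v ∧ (u, v) ∉ Γ.D ∧ (v, u) ∉ Γ.D ∧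
          r = FreeGroup.of u * FreeGroup.of v * (FreeGroup.of u)⁻¹ * (FreeGroup.of v)⁻¹) ∨
       (∃ a b : V, (a, b) ∈ Γ.D ∧
          r = FreeGroup.of a * FreeGroup.of b * (FreeGroup.of a)⁻¹ * FreeGroup.of b)}

/-- The twisted right-angled Artin group (TRAAG) based on a mixed graph `Γ`. -/
def TRAAG (Γ : MixedGraph V) : Type _ := PresentedGroup Γ.traagRels

instance (Γ : MixedGraph V) : Group (TRAAG Γ) := by unfold TRAAG; infer_instance

/-- The generator of the TRAAG corresponding to a vertex. -/
def gen (Γ : MixedGraph V) (v : V) : TRAAG Γ := PresentedGroup.of v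

/-- `Γ` has an oriented cycle: a sequence `e₀, …, eₙ` of oriented edges with
`t(eᵢ) = o(e_{i+1})` cyclically. -/
def HasOrientedCycle (Γ : MixedGraph V) : Prop :=
  ∃ (n : ℕ) (c : ZMod (n + 1) → V × V),
    (∀ i, c i ∈ Γ.D) ∧ ∀ i, (c i).2 = (c (i + 1)).1

/-- The full mixed subgraph of `Γ` spanned by a set `U` of vertices. -/
def induce (Γ : MixedGraph V) (U : Set V) : MixedGraph U where
  adj u v := Γ.adj u v
  symm u v h := Γ.symm u v h
  loopless v := Γ.loopless v
  D := {p | ((p.1 : V), (p.2 : V)) ∈ Γ.D}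
  D_isEdge _ he := Γ.D_isEdge _ he
  D_antisymm _ he := Γ.D_antisymm _ he

/-- A vertex `v` is a source if every edge containing `v` is either unoriented or
oriented with origin `v`, i.e. no oriented edge has terminus `v`. -/
def IsSource (Γ : MixedGraph V) (v : V) : Prop :=
  ∀ u : V, (u, v) ∉ Γ.D

/-- The link of a vertex: its set of neighbours. -/
def lk (Γ : MixedGraph V) (v : V) : Set V := {u | Γ.adj u v}

/-- The star of a vertex: its link together with the vertex itself. -/
def st (Γ : MixedGraph V) (v : V) : Set V := insert v (Γ.lk v)

end MixedGraph


open MixedGraph SemidirectProduct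

namespace TRAAGaux

lemma mk_rel_one {α : Type*} {rels : Set (FreeGroup α)} {r : FreeGroup α} (h : r ∈ rels) :
    PresentedGroup.mk rels r = 1 :=
  (QuotientGroup.eq_one_iff _).2 (Subgroup.subset_normalClosure h)

variable {V : Type*} (Γ : MixedGraph V)

lemma gen_comm {u v : V} (h : Γ.adj u v) (h1 : (u, v) ∉ Γ.D) (h2 : (v, u) ∉ Γ.D) :
    Γ.gen u * Γ.gen v * (Γ.gen u)⁻¹ * (Γ.gen v)⁻¹ = 1 := by
  have := mk_rel_one (rels := Γ.traagRels) (Or.inl ⟨u, v, h, h1, h2, rfl⟩)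
  simp [MixedGraph.gen, PresentedGroup.of, map_mul, map_inv] at this ⊢
  exact this

lemma gen_klein {a b : V} (h : (a, b) ∈ Γ.D) :
    Γ.gen a * Γ.gen b * (Γ.gen a)⁻¹ * Γ.gen b = 1 := by
  have := mk_rel_one (rels := Γ.traagRels) (Or.inr ⟨a, b, h, rfl⟩)
  simp [MixedGraph.gen, PresentedGroup.of, map_mul, map_inv] at this ⊢
  exact this

lemma comm_pow {G : Type*} [Group G] {a b : G}
    (h : a * b * a⁻¹ * b⁻¹ = 1) (i j : ℤ) :
    a ^ i * b ^ j * (a ^ i)⁻¹ * (b ^ j)⁻¹ = 1 := by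
  have h' : a * b = b * a := by
    have h0 : (a * b) * (b * a)⁻¹ = 1 := by
      rw [mul_inv_rev, ← mul_assoc]; exact h
    exact mul_inv_eq_one.mp h0
  have hc : Commute (a ^ i) (b ^ j) := (Commute.zpow_zpow h' i j : _)
  rw [hc.eq]; group

lemma conj_inv_fix {G : Type*} [Group G] {c b : G} (h : c * b * c⁻¹ = b⁻¹) :
    c⁻¹ * b * c⁻¹⁻¹ = b⁻¹ := by
  have e1 : c⁻¹ * b⁻¹ * c = b := by rw [← h]; group
  have e2 := congrArg (·⁻¹) e1
  simp only [mul_inv_rev, inv_inv] at e2 ⊢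
  rw [← e2]; group

lemma klein_conj_pow {G : Type*} [Group G] {c b : G} (h : c * b * c⁻¹ = b⁻¹) (j : ℤ) :
    c * b ^ j * c⁻¹ * b ^ j = 1 := by
  have : c * b ^ j * c⁻¹ = b ^ (-j) := by
    rw [← conj_zpow, h, inv_zpow, ← zpow_neg]
  rw [this]; group

lemma klein_pow {G : Type*} [Group G] {a b : G}
    (h : a * b * a⁻¹ * b = 1) (i : ℤˣ) (j : ℤ) :
    a ^ (i : ℤ) * b ^ j * (a ^ (i : ℤ))⁻¹ * b ^ j = 1 := by
  have h1 : a * b * a⁻¹ = b⁻¹ := mul_eq_one_iff_eq_inv.mp h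
  rcases Int.units_eq_one_or i with rfl | rfl
  · simpa using klein_conj_pow h1 j
  · have h2 := conj_inv_fix h1
    simpa using klein_conj_pow h2 j

variable {U : Set V}

lemma sq_one (f : U → ℤˣ) : f * f = 1 :=
  funext fun u => Int.units_mul_self (f u)

lemma inv_self (f : U → ℤˣ) : f⁻¹ = f := by
  rw [inv_eq_iff_mul_eq_one, sq_one]

variable (U) in
/-- the sign-twist endomorphism of the induced TRAAG attached to a sign function -/
def signEnd (f : U → ℤˣ) : TRAAG (Γ.induce U) →* TRAAG (Γ.induce U) :=
  PresentedGroup.toGroup (f := fun u => (Γ.induce U).gen u ^ ((f u : ℤ))) (by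
    rintro r (⟨u, v, h, h1, h2, rfl⟩ | ⟨a, b, hD, rfl⟩)
    · simp only [map_mul, map_inv, FreeGroup.lift_apply_of]
      exact comm_pow (gen_comm (Γ.induce U) h h1 h2) _ _
    · simp only [map_mul, map_inv, FreeGroup.lift_apply_of]
      exact klein_pow (gen_klein (Γ.induce U) hD) _ _)

lemma signEnd_gen (f : U → ℤˣ) (u : U) :
    signEnd Γ U f ((Γ.induce U).gen u) = (Γ.induce U).gen u ^ ((f u : ℤ)) :=
  PresentedGroup.toGroup.of _

lemma units_val_mul_self (x : ℤˣ) : (x : ℤ) * (x : ℤ) = 1 := by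
  rw [← Units.val_mul, Int.units_mul_self, Units.val_one]

lemma signEnd_comp (f g : U → ℤˣ) :
    (signEnd Γ U f).comp (signEnd Γ U g) = signEnd Γ U (f * g) := by
  apply PresentedGroup.ext
  intro x
  show signEnd Γ U f (signEnd Γ U g ((Γ.induce U).gen x)) = signEnd Γ U (f * g) ((Γ.induce U).gen x)
  rw [signEnd_gen, map_zpow, signEnd_gen, signEnd_gen, ← zpow_mul]
  congr 1

lemma signEnd_invol (f : U → ℤˣ) :
    (signEnd Γ U f).comp (signEnd Γ U f) = MonoidHom.id _ := by
  rw [signEnd_comp, sq_one]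
  apply PresentedGroup.ext
  intro x
  show signEnd Γ U 1 ((Γ.induce U).gen x) = (Γ.induce U).gen x
  rw [signEnd_gen]; simp

variable (U) in
/-- the sign-twist automorphisms, as a homomorphism from the group of sign functions -/
def signHom : (U → ℤˣ) →* MulAut (TRAAG (Γ.induce U)) where
  toFun f := MonoidHom.toMulEquiv (signEnd Γ U f) (signEnd Γ U f)
      (signEnd_invol Γ f) (signEnd_invol Γ f)
  map_one' := by
    apply MulEquiv.ext
    intro x
    show signEnd Γ U 1 x = x
    have : signEnd Γ U (1 * 1) = MonoidHom.id _ := by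
      rw [← signEnd_comp, signEnd_invol]
    simpa using DFunLike.congr_fun this x
  map_mul' f g := by
    apply MulEquiv.ext
    intro x
    show signEnd Γ U (f * g) x = signEnd Γ U f (signEnd Γ U g x)
    exact (DFunLike.congr_fun (signEnd_comp Γ f g) x).symm

lemma signHom_gen (f : U → ℤˣ) (u : U) :
    signHom Γ U f ((Γ.induce U).gen u) = (Γ.induce U).gen u ^ ((f u : ℤ)) :=
  signEnd_gen Γ f u

variable (U) in
/-- the mirror group -/
abbrev K := TRAAG (Γ.induce U) ⋊[signHom Γ U] (U → ℤˣ)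

variable (U) in
open scoped Classical in
/-- sign function recording which oriented edges leave `a` into `U` -/
noncomputable def sgn (a : V) : U → ℤˣ := fun u => if (a, (u : V)) ∈ Γ.D then -1 else 1

lemma sgn_pos {a : V} {u : U} (h : (a, (u : V)) ∈ Γ.D) : sgn Γ U a u = -1 := by
  simp [sgn, h]

lemma sgn_neg {a : V} {u : U} (h : (a, (u : V)) ∉ Γ.D) : sgn Γ U a u = 1 := by
  simp [sgn, h]

variable (U) in
open scoped Classical in
/-- the generator images defining `Φ : G_Γ → K` -/
noncomputable def Fmap : V → K Γ U := fun v =>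
  if h : v ∈ U then inl ((Γ.induce U).gen ⟨v, h⟩) else inr (sgn Γ U v)

lemma Fmap_pos {v : V} (h : v ∈ U) : Fmap Γ U v = inl ((Γ.induce U).gen ⟨v, h⟩) :=
  dif_pos h

lemma Fmap_neg {v : V} (h : v ∉ U) : Fmap Γ U v = inr (sgn Γ U v) :=
  dif_neg h

section Kcomp

variable {g g' : TRAAG (Γ.induce U)} {f f' : U → ℤˣ}

lemma comm_inl_inr (hf : signHom Γ U f g = g) :
    inl g * inr f * (inl g)⁻¹ * (inr f)⁻¹ = (1 : K Γ U) := by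
  ext <;> simp [inv_self, hf]

lemma comm_inr_inl (hf : signHom Γ U f g = g) :
    inr f * inl g * (inr f)⁻¹ * (inl g)⁻¹ = (1 : K Γ U) := by
  ext <;> simp [inv_self, hf]

lemma comm_inr_inr : inr f * inr f' * (inr f)⁻¹ * (inr f')⁻¹ = (1 : K Γ U) := by
  ext u <;> simp [inv_self]
  · rcases Int.units_eq_one_or (f u) with h | h <;>
      rcases Int.units_eq_one_or (f' u) with h' | h' <;> rw [h, h'] <;> decide

lemma klein_inl_inr (hf : signHom Γ U f g = g) :
    inl g * inr f * (inl g)⁻¹ * inr f = (1 : K Γ U) := by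
  ext u <;> simp [inv_self, hf]

lemma klein_inr_inl (hf : signHom Γ U f g = g⁻¹) :
    inr f * inl g * (inr f)⁻¹ * inl g = (1 : K Γ U) := by
  ext <;> simp [inv_self, hf]

lemma klein_inr_inr : inr f * inr f' * (inr f)⁻¹ * inr f' = (1 : K Γ U) := by
  ext u <;> simp [inv_self]
  · rcases Int.units_eq_one_or (f u) with h | h <;>
      rcases Int.units_eq_one_or (f' u) with h' | h' <;> rw [h, h'] <;> decide

end Kcomp

variable (U) in
/-- the twisting homomorphism `G_Γ → G_Δ ⋊ (U → ℤˣ)` -/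
noncomputable def Phi : TRAAG Γ →* K Γ U :=
  PresentedGroup.toGroup (f := Fmap Γ U) (by
    rintro r (⟨u, v, hadj, h1, h2, rfl⟩ | ⟨a, b, hD, rfl⟩)
    · simp only [map_mul, map_inv, FreeGroup.lift_apply_of]
      by_cases hu : u ∈ U <;> by_cases hv : v ∈ U
      · rw [Fmap_pos Γ hu, Fmap_pos Γ hv, ← map_inv, ← map_inv, ← map_mul, ← map_mul, ← map_mul,
          gen_comm (Γ.induce U) (u := ⟨u, hu⟩) (v := ⟨v, hv⟩) hadj h1 h2, map_one]
      · rw [Fmap_pos Γ hu, Fmap_neg Γ hv]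
        exact comm_inl_inr Γ (by rw [signHom_gen, sgn_neg Γ h2, Units.val_one, zpow_one])
      · rw [Fmap_neg Γ hu, Fmap_pos Γ hv]
        exact comm_inr_inl Γ (by rw [signHom_gen, sgn_neg Γ h1, Units.val_one, zpow_one])
      · rw [Fmap_neg Γ hu, Fmap_neg Γ hv]
        exact comm_inr_inr Γ
    · have hne : (b, a) ∉ Γ.D := Γ.D_antisymm (a, b) hD
      simp only [map_mul, map_inv, FreeGroup.lift_apply_of]
      by_cases ha : a ∈ U <;> by_cases hb : b ∈ U
      · rw [Fmap_pos Γ ha, Fmap_pos Γ hb, ← map_inv, ← map_mul, ← map_mul, ← map_mul,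
          gen_klein (Γ.induce U) (a := ⟨a, ha⟩) (b := ⟨b, hb⟩) hD, map_one]
      · rw [Fmap_pos Γ ha, Fmap_neg Γ hb]
        exact klein_inl_inr Γ (by rw [signHom_gen, sgn_neg Γ hne, Units.val_one, zpow_one])
      · rw [Fmap_neg Γ ha, Fmap_pos Γ hb]
        refine klein_inr_inl Γ ?_
        rw [signHom_gen, sgn_pos Γ hD]
        simp
      · rw [Fmap_neg Γ ha, Fmap_neg Γ hb]
        exact klein_inr_inr Γ)

variable (U) in
/-- the natural homomorphism `G_Δ → G_Γ` -/
def iota : TRAAG (Γ.induce U) →* TRAAG Γ :=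
  PresentedGroup.toGroup (f := fun u : U => Γ.gen (u : V)) (by
    rintro r (⟨u, v, hadj, h1, h2, rfl⟩ | ⟨a, b, hD, rfl⟩)
    · simp only [map_mul, map_inv, FreeGroup.lift_apply_of]
      exact gen_comm Γ hadj h1 h2
    · simp only [map_mul, map_inv, FreeGroup.lift_apply_of]
      exact gen_klein Γ hD)

lemma iota_of (x : U) : iota Γ U (PresentedGroup.of x) = Γ.gen (x : V) :=
  PresentedGroup.toGroup.of _

lemma Phi_comp_iota : (Phi Γ U).comp (iota Γ U) = inl := by
  apply PresentedGroup.ext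
  intro x
  show Phi Γ U (iota Γ U (PresentedGroup.of x)) = inl (PresentedGroup.of x)
  rw [iota_of, show Phi Γ U (Γ.gen (x : V)) = Fmap Γ U (x : V) from PresentedGroup.toGroup.of _,
    Fmap_pos Γ x.2]
  rfl

lemma iota_inj : Function.Injective (iota Γ U) := by
  intro x y hxy
  apply inl_injective (φ := signHom Γ U)
  have h1 := DFunLike.congr_fun (Phi_comp_iota Γ (U := U)) x
  have h2 := DFunLike.congr_fun (Phi_comp_iota Γ (U := U)) y
  simp only [MonoidHom.comp_apply] at h1 h2
  rw [← h1, ← h2, hxy]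

lemma iota_range : (iota Γ U).range = Subgroup.closure (Γ.gen '' U) := by
  apply le_antisymm
  · rintro _ ⟨x, rfl⟩
    refine PresentedGroup.generated_by _ ((Subgroup.closure (Γ.gen '' U)).comap (iota Γ U)) ?_ x
    intro j
    show iota Γ U (PresentedGroup.of j) ∈ Subgroup.closure (Γ.gen '' U)
    rw [iota_of]
    exact Subgroup.subset_closure ⟨(j : V), j.2, rfl⟩
  · rw [Subgroup.closure_le]
    rintro _ ⟨v, hv, rfl⟩
    exact ⟨PresentedGroup.of ⟨v, hv⟩, iota_of Γ _⟩

end TRAAGaux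

open MixedGraph in
/-- For a mixed graph `Γ` with vertex set `V` and `U ⊆ V`, the subgroup of the TRAAG
`G_Γ` generated by `U` is isomorphic to the TRAAG based on the full mixed subgraph of `Γ`
spanned by `U`. -/
theorem TRAAG.closure_iso_induce {V : Type} (Γ : MixedGraph V) (U : Set V) :
    Nonempty (TRAAG (Γ.induce U) ≃* ↥(Subgroup.closure (Γ.gen '' U))) :=
  ⟨(MonoidHom.ofInjective (TRAAGaux.iota_inj Γ)).trans
    (MulEquiv.subgroupCongr (TRAAGaux.iota_range Γ))⟩
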